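/- Let X be a σ-finite measure space and φ : X × X → ℂ of the form φ(x,y) = ⟨V(x), W(y)⟩_H for a Hilbert space H and essentially bounded measurable functions V, W : X → H. Then the map S_φ : T_k ↦ T_{φ·k} on Hilbert–Schmidt operators on L²(X) is bounded with norm at most (ess sup ‖V‖)(ess sup ‖W‖), where (φ·k)(x,y) = φ(y,x)k(x,y). -/

import Mathlib

open MeasureTheory
open scoped ComplexInnerProductSpace

/-!
By Cauchy–Schwarz, `|φ(y, x)| ≤ ‖V y‖ ‖W x‖ ≤ C_V C_W` for almost every `(x, y)`, so on kernels
`S_φ` is multiplication by an essentially bounded measurable function of `L^∞(X × X)`.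
-/

theorem norm_inner_le_mul_of_norm_le {𝕜 E : Type*} [RCLike 𝕜] [SeminormedAddCommGroup E]
    [InnerProductSpace 𝕜 E] {v w : E} {a b : ℝ} (hv : ‖v‖ ≤ a) (hw : ‖w‖ ≤ b) :
    ‖inner 𝕜 v w‖ ≤ a * b :=
  (norm_inner_le_norm v w).trans <|
    mul_le_mul hv hw (norm_nonneg w) ((norm_nonneg v).trans hv)

theorem ae_norm_inner_swap_le {α β 𝕜 E : Type*} [MeasurableSpace α] [MeasurableSpace β] [RCLike 𝕜]
    [SeminormedAddCommGroup E] [InnerProductSpace 𝕜 E] (μ : Measure α) (ν : Measure β)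
    {V : β → E} {W : α → E} {a b : ℝ}
    (hV : ∀ᵐ y ∂ν, ‖V y‖ ≤ a) (hW : ∀ᵐ x ∂μ, ‖W x‖ ≤ b) :
    ∀ᵐ p ∂μ.prod ν, ‖inner 𝕜 (V p.2) (W p.1)‖ ≤ a * b := by
  filter_upwards [Measure.quasiMeasurePreserving_snd.ae hV,
    Measure.quasiMeasurePreserving_fst.ae hW] with p hVp hWp
  exact norm_inner_le_mul_of_norm_le hVp hWp

theorem schur_multiplier_HS_bound_general
    {X : Type*} [MeasurableSpace X] (μ : Measure X)
    {H : Type*} [NormedAddCommGroup H] [InnerProductSpace ℂ H]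
    [TopologicalSpace.SeparableSpace H] [MeasurableSpace H] [BorelSpace H]
    (V W : X → H) (hVm : Measurable V) (hWm : Measurable W)
    (CV CW : ℝ)
    (hV : ∀ᵐ x ∂μ, ‖V x‖ ≤ CV) (hW : ∀ᵐ y ∂μ, ‖W y‖ ≤ CW)
    (φ : X × X → ℂ) (hφ : ∀ x y, φ (x, y) = ⟪V x, W y⟫)
    (k : X × X → ℂ) (hk : MemLp k 2 (μ.prod μ)) :
    MemLp (fun p : X × X => φ (p.2, p.1) * k p) 2 (μ.prod μ) ∧
      eLpNorm (fun p : X × X => φ (p.2, p.1) * k p) 2 (μ.prod μ) ≤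
        ENNReal.ofReal (CV * CW) * eLpNorm k 2 (μ.prod μ) := by
  have hbound : ∀ᵐ p ∂μ.prod μ, ‖φ (p.2, p.1) * k p‖ ≤ CV * CW * ‖k p‖ := by
    filter_upwards [ae_norm_inner_swap_le (𝕜 := ℂ) μ μ hV hW] with p hp
    rw [norm_mul, hφ]
    gcongr
  have hmeas : AEStronglyMeasurable (fun p : X × X => φ (p.2, p.1) * k p) (μ.prod μ) := by
    have hsymb : Measurable fun p : X × X => φ (p.2, p.1) := by
      simp only [hφ]
      exact (hVm.comp measurable_snd).inner (hWm.comp measurable_fst)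
    exact hsymb.aestronglyMeasurable.mul hk.1
  exact ⟨hk.of_le_mul hmeas hbound, eLpNorm_le_mul_eLpNorm_of_ae_le_mul hbound 2⟩

/-- If `φ(x,y) = ⟨V(x), W(y)⟩_H` with `V, W : X → H` essentially bounded
measurable functions into a separable Hilbert space `H`, then the Schur multiplier
`S_φ : T_k ↦ T_{φ·k}` on Hilbert–Schmidt operators on `L²(X)` is bounded with norm at
most `(ess sup ‖V‖)(ess sup ‖W‖)`.  Since `T_k ↦ k` is an isometry onto `L²(X × X)`
(with the Hilbert–Schmidt norm), this is expressed at the level of kernels: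
`‖φ · k‖₂ ≤ C_V C_W ‖k‖₂` for every `k ∈ L²(X × X)`. -/
theorem schur_multiplier_HS_bound
    {X : Type*} [MeasurableSpace X] (μ : Measure X) [SigmaFinite μ]
    {H : Type*} [NormedAddCommGroup H] [InnerProductSpace ℂ H]
    [TopologicalSpace.SeparableSpace H] [MeasurableSpace H] [BorelSpace H]
    (V W : X → H) (hVm : Measurable V) (hWm : Measurable W)
    (CV CW : ℝ) (hCV : 0 ≤ CV) (hCW : 0 ≤ CW)
    (hV : ∀ᵐ x ∂μ, ‖V x‖ ≤ CV) (hW : ∀ᵐ y ∂μ, ‖W y‖ ≤ CW)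
    (φ : X × X → ℂ) (hφ : ∀ x y, φ (x, y) = ⟪V x, W y⟫)
    (k : X × X → ℂ) (hk : MemLp k 2 (μ.prod μ)) :
    MemLp (fun p : X × X => φ (p.2, p.1) * k p) 2 (μ.prod μ) ∧
      eLpNorm (fun p : X × X => φ (p.2, p.1) * k p) 2 (μ.prod μ) ≤
        ENNReal.ofReal (CV * CW) * eLpNorm k 2 (μ.prod μ) :=
  schur_multiplier_HS_bound_general μ V W hVm hWm CV CW hV hW φ hφ k hk
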